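/- arXiv:1311.0697 — 2 statements merged into one kernel-verified Lean document; each statement's English description precedes it below -/
import Mathlib

section
/- Let Γ be a profinite group, 𝔊 a profinite Γ-group, η : Γ → 𝔊 a continuous 1-cocycle with kernel Δ := η⁻¹(1). Let E := 𝔊 ⋊ Γ be the semidirect product (with multiplication (g,γ)(g',γ') = (g·(γ•g'), γγ')), Γ₁ := {(1,γ) : γ ∈ Γ} and Γ₂ := {(η(γ),γ) : γ ∈ Γ}, which are closed subgroups of E. Then the following are equivalent: (1) η is surjective; (2) for every open ideal a of 𝔊 the induced cocycle η_a : Γ → 𝔊/a is surjective; (3) the continuous injection Γ/Δ → 𝔊 induced by η is a homeomorphism; (4) E = Γ₁·Γ₂; (5) E = Γ₂·Γ₁; (6) the continuous map Γ × 𝔊 → 𝔊, (γ,g) ↦ η(γ)·(γ•g), is a transitive action of Γ on the underlying profinite space of 𝔊 whose stabilizer of the neutral element is Δ. -/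
/-- An *ideal* of a topological `Γ`-group `𝔊`: a closed, normal, `Γ`-invariant subgroup. -/
def IsIdealSG (Γ : Type*) {𝔊 : Type*} [Group 𝔊] [TopologicalSpace 𝔊] [SMul Γ 𝔊]
    (a : Subgroup 𝔊) : Prop :=
  IsClosed (a : Set 𝔊) ∧ a.Normal ∧ ∀ (γ : Γ) (g : 𝔊), g ∈ a → γ • g ∈ a

/-! All six conditions are reformulations of the surjectivity of `η`. Only (2) needs the
topology: the open ideals form a neighbourhood basis of `1` in `𝔊` (the `Γ`-core
`⋂ γ, γ⁻¹ • H` of an open normal subgroup `H` is open because `Γ` is compact), so surjectivity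
modulo every open ideal makes the image of `η` dense, and this image is compact, hence closed.
For (3), a continuous bijection from the compact space `Γ ⧸ Δ` onto the Hausdorff space `𝔊`
is a homeomorphism. -/

open Function

def IsCrossedHom {Γ G : Type*} [Group Γ] [Group G] [MulDistribMulAction Γ G] (η : Γ → G) :
    Prop :=
  ∀ σ τ : Γ, η (σ * τ) = η σ * σ • η τ

namespace IsCrossedHom

variable {Γ G : Type*} [Group Γ] [Group G] [MulDistribMulAction Γ G] {η : Γ → G}

theorem map_one (hη : IsCrossedHom η) : η 1 = 1 := by
  simpa using hη 1 1

theorem map_inv_mul (hη : IsCrossedHom η) (a b : Γ) : η (a⁻¹ * b) = a⁻¹ • ((η a)⁻¹ * η b) := by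
  rw [eq_inv_smul_iff, eq_inv_mul_iff_mul_eq, ← hη, mul_inv_cancel_left]

theorem map_inv (hη : IsCrossedHom η) (a : Γ) : η a⁻¹ = a⁻¹ • (η a)⁻¹ := by
  simpa [hη.map_one] using hη.map_inv_mul a 1

theorem eq_iff_map_inv_mul_eq_one (hη : IsCrossedHom η) {a b : Γ} :
    η a = η b ↔ η (a⁻¹ * b) = 1 := by
  rw [hη.map_inv_mul, inv_smul_eq_iff, smul_one, inv_mul_eq_one]

def ker (hη : IsCrossedHom η) : Subgroup Γ where
  carrier := η ⁻¹' {1}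
  one_mem' := hη.map_one
  mul_mem' {a b} ha hb := by
    simp_all only [Set.mem_preimage, Set.mem_singleton_iff, hη a b, smul_one, mul_one]
  inv_mem' {a} ha := by
    simp_all only [Set.mem_preimage, Set.mem_singleton_iff, hη.map_inv a, inv_one, smul_one]

theorem coe_ker (hη : IsCrossedHom η) : (hη.ker : Set Γ) = η ⁻¹' {1} := rfl

def kerLift (hη : IsCrossedHom η) : Γ ⧸ hη.ker → G :=
  Quotient.lift η fun _ _ hab =>
    hη.eq_iff_map_inv_mul_eq_one.2 (QuotientGroup.leftRel_apply.1 hab)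

theorem kerLift_injective (hη : IsCrossedHom η) : Injective hη.kerLift := by
  rintro ⟨a⟩ ⟨b⟩ hab
  exact QuotientGroup.eq.2 (hη.eq_iff_map_inv_mul_eq_one.1 hab)

theorem exists_homeomorph_quotient_ker [TopologicalSpace Γ] [CompactSpace Γ] [TopologicalSpace G]
    [T2Space G] (hη : IsCrossedHom η) (hcont : Continuous η) (hsurj : Surjective η) :
    ∃ h : (Γ ⧸ hη.ker) ≃ₜ G, ∀ γ : Γ, h γ = η γ := by
  refine ⟨Continuous.homeoOfEquivCompactToT2
    (f := Equiv.ofBijective hη.kerLift ⟨hη.kerLift_injective, ?_⟩) ?_, fun _ => rfl⟩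
  · exact Surjective.of_comp (g := QuotientGroup.mk) hsurj
  · exact hcont.quotient_lift _

local notation "E" => G ⋊[MulDistribMulAction.toMulAut Γ G] Γ

theorem surjective_iff_forall_eq_inr_mul (hη : IsCrossedHom η) :
    Surjective η ↔ ∀ e : E, ∃ γ₁ γ₂ : Γ, e = SemidirectProduct.inr γ₁ * ⟨η γ₂, γ₂⟩ := by
  constructor
  · intro hsurj e
    obtain ⟨τ, hτ⟩ := hsurj (e.right⁻¹ • e.left)⁻¹
    refine ⟨e.right * τ, τ⁻¹, SemidirectProduct.ext ?_ ?_⟩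
    · change e.left = 1 * (e.right * τ) • η τ⁻¹
      rw [one_mul, hη.map_inv, hτ, smul_smul, mul_inv_cancel_right, inv_inv, smul_inv_smul]
    · exact (mul_inv_cancel_right _ _).symm
  · intro h g
    obtain ⟨γ₁, γ₂, he⟩ := h ⟨g⁻¹, 1⟩
    have hleft : g⁻¹ = γ₁ • η γ₂ := by simpa using congrArg SemidirectProduct.left he
    have hright : 1 = γ₁ * γ₂ := congrArg SemidirectProduct.right he
    refine ⟨γ₂⁻¹, ?_⟩
    rw [hη.map_inv, smul_inv', ← inv_inj, inv_inv, hleft, eq_inv_of_mul_eq_one_left hright.symm]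

theorem surjective_iff_forall_eq_mul_inr :
    Surjective η ↔ ∀ e : E, ∃ γ₁ γ₂ : Γ, e = ⟨η γ₁, γ₁⟩ * SemidirectProduct.inr γ₂ := by
  constructor
  · intro hsurj e
    obtain ⟨γ, hγ⟩ := hsurj e.left
    refine ⟨γ, γ⁻¹ * e.right, SemidirectProduct.ext ?_ ?_⟩
    · simp [hγ]
    · exact (mul_inv_cancel_left _ _).symm
  · intro h g
    obtain ⟨γ₁, γ₂, he⟩ := h ⟨g, 1⟩
    exact ⟨γ₁, by simpa using (congrArg SemidirectProduct.left he).symm⟩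

theorem mul_smul_mul_smul (hη : IsCrossedHom η) (σ τ : Γ) (g : G) :
    η (σ * τ) * (σ * τ) • g = η σ * σ • (η τ * τ • g) := by
  rw [hη, smul_mul', mul_assoc, mul_smul]

theorem surjective_iff_forall_exists_mul_smul_eq (hη : IsCrossedHom η) :
    Surjective η ↔ ∀ g g' : G, ∃ γ : Γ, η γ * γ • g = g' := by
  constructor
  · intro hsurj g g'
    obtain ⟨σ, rfl⟩ := hsurj g
    obtain ⟨τ, rfl⟩ := hsurj g'
    exact ⟨τ * σ⁻¹, by rw [← hη, inv_mul_cancel_right]⟩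
  · intro h g
    obtain ⟨γ, hγ⟩ := h 1 g
    exact ⟨γ, by simpa using hγ⟩

end IsCrossedHom

section InvariantCore

variable (Γ : Type*) {G : Type*} [Group Γ] [Group G] [MulDistribMulAction Γ G]

def Subgroup.invariantCore (H : Subgroup G) : Subgroup G :=
  ⨅ γ : Γ, H.comap (MulDistribMulAction.toMonoidHom G γ)

variable {Γ}

theorem Subgroup.mem_invariantCore {H : Subgroup G} {x : G} :
    x ∈ H.invariantCore Γ ↔ ∀ γ : Γ, γ • x ∈ H := by
  simp [Subgroup.invariantCore, Subgroup.mem_iInf]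

theorem Subgroup.invariantCore_le (H : Subgroup G) : H.invariantCore Γ ≤ H := fun x hx => by
  simpa using Subgroup.mem_invariantCore.1 hx 1

theorem Subgroup.isIdealSG_invariantCore [TopologicalSpace G] [ContinuousConstSMul Γ G]
    {H : Subgroup G} (hclosed : IsClosed (H : Set G)) (hnormal : H.Normal) :
    IsIdealSG Γ (H.invariantCore Γ) := by
  refine ⟨?_, Subgroup.normal_iInf_normal fun γ => hnormal.comap _, fun γ x hx => ?_⟩
  · simp only [Subgroup.invariantCore, Subgroup.coe_iInf, Subgroup.coe_comap]
    exact isClosed_iInter fun γ => hclosed.preimage (continuous_const_smul γ)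
  · exact Subgroup.mem_invariantCore.2 fun δ => by
      rw [smul_smul]; exact Subgroup.mem_invariantCore.1 hx _

theorem Subgroup.isOpen_invariantCore [TopologicalSpace Γ] [CompactSpace Γ] [TopologicalSpace G]
    [SeparatelyContinuousMul G] [ContinuousSMul Γ G] {H : Subgroup G} (hopen : IsOpen (H : Set G)) :
    IsOpen (H.invariantCore Γ : Set G) := by
  refine Subgroup.isOpen_of_mem_nhds _ (g := 1) ?_
  have := isCompact_univ.eventually_forall_of_forall_eventually (x₀ := (1 : G))
    (P := fun x (γ : Γ) => γ • x ∈ H) fun γ _ => ?_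
  · exact this.mono fun x hx => Subgroup.mem_invariantCore.2 fun γ => hx γ trivial
  · have hcont : Continuous fun p : G × Γ => p.2 • p.1 := continuous_snd.smul continuous_fst
    exact hcont.continuousAt.preimage_mem_nhds (hopen.mem_nhds (by simp))

end InvariantCore

section Profinite

variable {Γ G : Type*} [Group Γ] [TopologicalSpace Γ] [CompactSpace Γ]
  [Group G] [TopologicalSpace G] [IsTopologicalGroup G] [CompactSpace G]
  [TotallyDisconnectedSpace G] [MulDistribMulAction Γ G] [ContinuousSMul Γ G]

theorem exists_isIdealSG_isOpen_subset {U : Set G} (hU : U ∈ nhds (1 : G)) :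
    ∃ a : Subgroup G, IsIdealSG Γ a ∧ IsOpen (a : Set G) ∧ (a : Set G) ⊆ U := by
  obtain ⟨V, hVU, hV, hV1⟩ := mem_nhds_iff.1 hU
  obtain ⟨H, hHV⟩ := ProfiniteGrp.exist_openNormalSubgroup_sub_open_nhds_of_one hV hV1
  exact ⟨H.invariantCore Γ,
    Subgroup.isIdealSG_invariantCore H.toOpenSubgroup.isClosed H.isNormal',
    Subgroup.isOpen_invariantCore H.isOpen',
    fun x hx => hVU (hHV (Subgroup.invariantCore_le _ hx))⟩

theorem mem_closure_range_of_forall_isIdealSG {X : Type*} (f : X → G) (g : G)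
    (h : ∀ a : Subgroup G, IsIdealSG Γ a → IsOpen (a : Set G) →
      ∃ x, (f x : G ⧸ a) = g) :
    g ∈ closure (Set.range f) := by
  refine mem_closure_iff_nhds.2 fun N hN => ?_
  have hN' : (g * ·) ⁻¹' N ∈ nhds (1 : G) :=
    (continuous_const_mul g).continuousAt.preimage_mem_nhds (by simpa using hN)
  obtain ⟨a, ha, ha_open, haN⟩ := exists_isIdealSG_isOpen_subset (Γ := Γ) hN'
  obtain ⟨x, hx⟩ := h a ha ha_open
  have hmem : g⁻¹ * f x ∈ a := by
    simpa using inv_mem (QuotientGroup.eq.1 hx)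
  exact ⟨f x, by simpa using haN hmem, x, rfl⟩

theorem surjective_of_forall_isIdealSG {X : Type*} [TopologicalSpace X] [CompactSpace X]
    [T2Space G] {f : X → G} (hf : Continuous f)
    (h : ∀ a : Subgroup G, IsIdealSG Γ a → IsOpen (a : Set G) →
      Surjective fun x => (f x : G ⧸ a)) :
    Surjective f := by
  have hclosed : IsClosed (Set.range f) := (isCompact_range hf).isClosed
  refine Set.range_eq_univ.1 (Set.eq_univ_of_forall fun g => ?_)
  rw [← hclosed.closure_eq]
  exact mem_closure_range_of_forall_isIdealSG (Γ := Γ) f g fun a ha ha_open => h a ha ha_open g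

end Profinite

theorem surjective_cocycle_TFAE_general
    {Γ 𝔊 : Type*} [Group Γ] [TopologicalSpace Γ]
    [CompactSpace Γ]
    [Group 𝔊] [TopologicalSpace 𝔊] [IsTopologicalGroup 𝔊]
    [CompactSpace 𝔊] [T2Space 𝔊] [TotallyDisconnectedSpace 𝔊]
    [MulDistribMulAction Γ 𝔊] [ContinuousSMul Γ 𝔊]
    (η : Γ → 𝔊) (hcont : Continuous η)
    (hcoc : ∀ σ τ : Γ, η (σ * τ) = η σ * σ • η τ) :
    List.TFAE
      [Function.Surjective η,
       ∀ a : Subgroup 𝔊, IsIdealSG Γ a → IsOpen (a : Set 𝔊) →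
          Function.Surjective (fun γ : Γ => (QuotientGroup.mk (η γ) : 𝔊 ⧸ a)),
       ∃ D : Subgroup Γ, (D : Set Γ) = η ⁻¹' {1} ∧
          ∃ h : (Γ ⧸ D) ≃ₜ 𝔊, ∀ γ : Γ, h (QuotientGroup.mk γ) = η γ,
       ∀ e : 𝔊 ⋊[MulDistribMulAction.toMulAut Γ 𝔊] Γ, ∃ γ₁ γ₂ : Γ,
          e = SemidirectProduct.inr γ₁ *
              (⟨η γ₂, γ₂⟩ : 𝔊 ⋊[MulDistribMulAction.toMulAut Γ 𝔊] Γ),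
       ∀ e : 𝔊 ⋊[MulDistribMulAction.toMulAut Γ 𝔊] Γ, ∃ γ₁ γ₂ : Γ,
          e = (⟨η γ₁, γ₁⟩ : 𝔊 ⋊[MulDistribMulAction.toMulAut Γ 𝔊] Γ) *
              SemidirectProduct.inr γ₂,
       (∀ σ τ : Γ, ∀ g : 𝔊, η (σ * τ) * (σ * τ) • g = η σ * σ • (η τ * τ • g)) ∧
         (∀ g g' : 𝔊, ∃ γ : Γ, η γ * γ • g = g') ∧
         {γ : Γ | η γ * γ • (1 : 𝔊) = 1} = η ⁻¹' {1}] := by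
  have hη : IsCrossedHom η := hcoc
  tfae_have 1 → 2 := fun hsurj a _ _ => QuotientGroup.mk_surjective.comp hsurj
  tfae_have 2 → 1 := surjective_of_forall_isIdealSG hcont
  tfae_have 1 → 3 := fun hsurj =>
    ⟨hη.ker, hη.coe_ker, hη.exists_homeomorph_quotient_ker hcont hsurj⟩
  tfae_have 3 → 1 := by
    rintro ⟨D, -, h, hh⟩
    exact funext hh ▸ h.surjective.comp QuotientGroup.mk_surjective
  tfae_have 1 ↔ 4 := hη.surjective_iff_forall_eq_inr_mul
  tfae_have 1 ↔ 5 := IsCrossedHom.surjective_iff_forall_eq_mul_inr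
  tfae_have 1 ↔ 6 := by
    rw [hη.surjective_iff_forall_exists_mul_smul_eq]
    simp only [hη.mul_smul_mul_smul, smul_one, mul_one, implies_true, true_and]
    exact (and_iff_left rfl).symm
  tfae_finish

/-- For a profinite group `Γ`, a profinite `Γ`-group `𝔊` and a continuous 1-cocycle
`η : Γ → 𝔊` with kernel `Δ = η⁻¹(1)`, with `E = 𝔊 ⋊ Γ`, `Γ₁` the canonical copy of `Γ` and
`Γ₂ = {(η γ, γ)}` the copy determined by `η`, the following are equivalent:
(1) `η` is surjective;
(2) for every open ideal `a` of `𝔊` the induced cocycle `η_a : Γ → 𝔊/a` is surjective;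
(3) the continuous injection `Γ/Δ → 𝔊` induced by `η` is a homeomorphism;
(4) `E = Γ₁·Γ₂`;
(5) `E = Γ₂·Γ₁`;
(6) `(γ,g) ↦ η(γ)·(γ•g)` is a transitive action of `Γ` on `𝔊` with stabilizer `Δ` of `1`. -/
theorem surjective_cocycle_TFAE
    {Γ 𝔊 : Type*} [Group Γ] [TopologicalSpace Γ] [IsTopologicalGroup Γ]
    [CompactSpace Γ] [T2Space Γ] [TotallyDisconnectedSpace Γ]
    [Group 𝔊] [TopologicalSpace 𝔊] [IsTopologicalGroup 𝔊]
    [CompactSpace 𝔊] [T2Space 𝔊] [TotallyDisconnectedSpace 𝔊]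
    [MulDistribMulAction Γ 𝔊] [ContinuousSMul Γ 𝔊]
    (η : Γ → 𝔊) (hcont : Continuous η)
    (hcoc : ∀ σ τ : Γ, η (σ * τ) = η σ * σ • η τ) :
    List.TFAE
      [Function.Surjective η,
       ∀ a : Subgroup 𝔊, IsIdealSG Γ a → IsOpen (a : Set 𝔊) →
          Function.Surjective (fun γ : Γ => (QuotientGroup.mk (η γ) : 𝔊 ⧸ a)),
       ∃ D : Subgroup Γ, (D : Set Γ) = η ⁻¹' {1} ∧
          ∃ h : (Γ ⧸ D) ≃ₜ 𝔊, ∀ γ : Γ, h (QuotientGroup.mk γ) = η γ,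
       ∀ e : 𝔊 ⋊[MulDistribMulAction.toMulAut Γ 𝔊] Γ, ∃ γ₁ γ₂ : Γ,
          e = SemidirectProduct.inr γ₁ *
              (⟨η γ₂, γ₂⟩ : 𝔊 ⋊[MulDistribMulAction.toMulAut Γ 𝔊] Γ),
       ∀ e : 𝔊 ⋊[MulDistribMulAction.toMulAut Γ 𝔊] Γ, ∃ γ₁ γ₂ : Γ,
          e = (⟨η γ₁, γ₁⟩ : 𝔊 ⋊[MulDistribMulAction.toMulAut Γ 𝔊] Γ) *
              SemidirectProduct.inr γ₂,
       (∀ σ τ : Γ, ∀ g : 𝔊, η (σ * τ) * (σ * τ) • g = η σ * σ • (η τ * τ • g)) ∧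
         (∀ g g' : 𝔊, ∃ γ : Γ, η γ * γ • g = g') ∧
         {γ : Γ | η γ * γ • (1 : 𝔊) = 1} = η ⁻¹' {1}] :=
  surjective_cocycle_TFAE_general η hcont hcoc
end

section
/- Let η : Γ → 𝔊 be a generating cocycle and call an ideal a of 𝔊 coGalois if the induced triple (Γ, 𝔊/a, η_a) is a coGalois triple. Then: (1) if a is a coGalois ideal then every ideal containing a is coGalois, and every coGalois ideal is a Kneser ideal; (2) an ideal a is coGalois if and only if every open ideal b of 𝔊 containing a is coGalois; (3) every coGalois ideal of 𝔊 contains a minimal coGalois ideal (minimal with respect to inclusion among coGalois ideals). -/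
def cogalJ (Γ : Type*) {𝔊 : Type*} [Group 𝔊] [TopologicalSpace 𝔊] [SMul Γ 𝔊]
    (η : Γ → 𝔊) (X : Set Γ) : Subgroup 𝔊 :=
  sInf {a : Subgroup 𝔊 | IsIdealSG Γ a ∧ ∀ γ ∈ X, η γ ∈ a}

/-- `(Γ, 𝔊', η')` is a *coGalois triple* if `η'` is surjective and the operators `J'` and
`S'` are mutually inverse between the closed subgroups of `Γ` containing `ker η'` and the
ideals of `𝔊'`. -/
def IsCoGaloisTriple (Γ : Type*) (𝔊' : Type*) [Group Γ] [TopologicalSpace Γ]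
    [Group 𝔊'] [TopologicalSpace 𝔊'] [SMul Γ 𝔊'] (η : Γ → 𝔊') : Prop :=
  Function.Surjective η ∧
  (∀ Λ : Subgroup Γ, IsClosed (Λ : Set Γ) → (∀ γ : Γ, η γ = 1 → γ ∈ Λ) →
      η ⁻¹' ((cogalJ Γ η (Λ : Set Γ) : Subgroup 𝔊') : Set 𝔊') = (Λ : Set Γ)) ∧
  (∀ a : Subgroup 𝔊', IsIdealSG Γ a → cogalJ Γ η (η ⁻¹' (a : Set 𝔊')) = a)

def quotSMul {Γ 𝔊 : Type*} [Group Γ] [Group 𝔊] [MulDistribMulAction Γ 𝔊]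
    (a : Subgroup 𝔊) (hinv : ∀ (γ : Γ) (g : 𝔊), g ∈ a → γ • g ∈ a) :
    SMul Γ (𝔊 ⧸ a) :=
  ⟨fun γ => Quotient.map' (fun g => γ • g) (by
    intro g₁ g₂ h
    rw [QuotientGroup.leftRel_apply] at h ⊢
    have := hinv γ _ h
    rwa [smul_mul', smul_inv'] at this)⟩

/-- An ideal `a` of `𝔊` is a *coGalois ideal* (w.r.t. `η`) if the induced triple
`(Γ, 𝔊/a, η_a)` is a coGalois triple. -/
def IsCoGaloisIdeal {Γ 𝔊 : Type*} [Group Γ] [TopologicalSpace Γ]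
    [Group 𝔊] [TopologicalSpace 𝔊] [MulDistribMulAction Γ 𝔊] (η : Γ → 𝔊)
    (a : Subgroup 𝔊) (hn : a.Normal)
    (hinv : ∀ (γ : Γ) (g : 𝔊), g ∈ a → γ • g ∈ a) : Prop :=
  letI := hn
  letI := quotSMul a hinv
  IsCoGaloisTriple Γ (𝔊 ⧸ a) (fun γ : Γ => (QuotientGroup.mk (η γ) : 𝔊 ⧸ a))

/-- An ideal `a` of `𝔊` is a *Kneser ideal* (w.r.t. `η`) if `η_a : Γ → 𝔊/a` is surjective. -/
def IsKneserIdeal {Γ 𝔊 : Type*} [Group 𝔊] [TopologicalSpace 𝔊] [SMul Γ 𝔊]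
    (η : Γ → 𝔊) (a : Subgroup 𝔊) : Prop :=
  Function.Surjective (fun γ : Γ => (QuotientGroup.mk (η γ) : 𝔊 ⧸ a))


open Set

/-!
Transported from `𝔊 ⧸ a` to `𝔊`, the coGalois property of `a` says: `a` is Kneser, and every
closed subgroup `Λ ⊇ η⁻¹(a)` is `η⁻¹` of the smallest ideal containing `a` and `η(Λ)`. For
`b ⊇ a` with `a` Kneser, the smallest ideal containing `b` and `η(Λ)` is that containing `a` and
`η(Λ)`, whence upward closure. The key point is that the property passes to the intersection of
a downward-directed family of coGalois ideals: by compactness of `Γ`, an element of `Γ` violating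
it for the intersection, separated from `Λ` by an open subgroup, already violates it for one
member of the family. Then (2) holds because a closed ideal is the directed intersection of the
open ideals containing it, and (3) is Zorn's lemma.
-/

theorem exists_preimage_subset_of_directed {ι X Y : Type*} [Nonempty ι] [TopologicalSpace X]
    [CompactSpace X] {f : X → Y} {t : ι → Set Y} (hdir : Directed (· ⊇ ·) t)
    (hcl : ∀ i, IsClosed (f ⁻¹' t i)) {U : Set X} (hU : IsOpen U) (h : f ⁻¹' ⋂ i, t i ⊆ U) :
    ∃ i, f ⁻¹' t i ⊆ U := by
  obtain ⟨i, hi⟩ := hU.isClosed_compl.isCompact.elim_directed_family_closed (fun i => f ⁻¹' t i) hcl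
    (by rwa [← preimage_iInter, inter_comm, ← Set.sdiff_eq, sdiff_eq_empty])
    (hdir.mono_comp (g := preimage f) _ fun _ _ => preimage_mono)
  exact ⟨i, by rwa [inter_comm, ← Set.sdiff_eq, sdiff_eq_empty] at hi⟩

theorem exists_minimal_le_of_isChain_sInf {α : Type*} [CompleteLattice α] {P : α → Prop}
    (hP : ∀ c : Set α, c.Nonempty → IsChain (· ≤ ·) c → (∀ x ∈ c, P x) → P (sInf c))
    {a : α} (ha : P a) : ∃ m ≤ a, Minimal P m := by
  obtain ⟨m, ham, hm⟩ := zorn_le_nonempty₀ (α := αᵒᵈ) {x | P (OrderDual.ofDual x)}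
    (fun c hcP hc y hy => ⟨sSup c, hP c ⟨y, hy⟩ hc.symm hcP, fun _ => le_sSup⟩)
    (OrderDual.toDual a) ha
  exact ⟨OrderDual.ofDual m, ham, hm⟩

theorem exists_isOpen_subgroup_notMem {G : Type*} [Group G] [TopologicalSpace G]
    [IsTopologicalGroup G] [CompactSpace G] [TotallyDisconnectedSpace G] {H : Subgroup G}
    (hH : IsClosed (H : Set G)) {x : G} (hx : x ∉ H) :
    ∃ N : Subgroup G, IsOpen (N : Set G) ∧ H ≤ N ∧ x ∉ N := by
  have hH' : H = sInf {N : Subgroup G | IsOpen (N : Set G) ∧ H ≤ N} :=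
    ProfiniteGrp.closedSubgroup_eq_sInf_open ⟨H, hH⟩
  rw [hH', Subgroup.mem_sInf] at hx
  push Not at hx
  obtain ⟨N, ⟨hN, hHN⟩, hxN⟩ := hx
  exact ⟨N, hN, hHN, hxN⟩

section Ideals

variable {Γ 𝔊 : Type*} [Group 𝔊] [TopologicalSpace 𝔊] [SMul Γ 𝔊]

theorem IsIdealSG.sInf {S : Set (Subgroup 𝔊)} (h : ∀ c ∈ S, IsIdealSG Γ c) :
    IsIdealSG Γ (sInf S) := by
  refine ⟨?_, ?_, fun γ g hg => Subgroup.mem_sInf.2 fun c hc => (h c hc).2.2 γ g ?_⟩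
  · rw [Subgroup.coe_sInf]
    exact isClosed_biInter fun c hc => (h c hc).1
  · rw [sInf_eq_iInf']
    exact Subgroup.normal_iInf_normal fun c => (h c c.2).2.1
  · exact Subgroup.mem_sInf.1 hg c hc

theorem IsIdealSG.inf {a b : Subgroup 𝔊} (ha : IsIdealSG Γ a) (hb : IsIdealSG Γ b) :
    IsIdealSG Γ (a ⊓ b) := by
  rw [← sInf_pair]
  exact IsIdealSG.sInf (by simp [ha, hb])

theorem isIdealSG_top : IsIdealSG Γ (⊤ : Subgroup 𝔊) :=
  ⟨isClosed_univ, inferInstance, fun _ _ _ => trivial⟩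

theorem cogalJ_preimage_of_surjective {η : Γ → 𝔊} (hη : Function.Surjective η)
    {b : Subgroup 𝔊} (hb : IsIdealSG Γ b) : cogalJ Γ η (η ⁻¹' b) = b :=
  le_antisymm (sInf_le ⟨hb, fun _ => id⟩) <| le_sInf fun _ hc x hx => by
    obtain ⟨γ, rfl⟩ := hη x
    exact hc.2 γ hx

/-- The preimage in `𝔊` of the ideal `cogalJ Γ η_a X` of `𝔊 ⧸ a` (`comap_mk_cogalJ`). -/
def cogalJOver (η : Γ → 𝔊) (a : Subgroup 𝔊) (X : Set Γ) : Subgroup 𝔊 :=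
  sInf {c : Subgroup 𝔊 | IsIdealSG Γ c ∧ a ≤ c ∧ ∀ γ ∈ X, η γ ∈ c}

variable {η : Γ → 𝔊} {a b c : Subgroup 𝔊} {X Y : Set Γ}

theorem isIdealSG_cogalJOver : IsIdealSG Γ (cogalJOver η a X) :=
  IsIdealSG.sInf fun _ hc => hc.1

theorem le_cogalJOver : a ≤ cogalJOver η a X :=
  le_sInf fun _ hc => hc.2.1

theorem map_mem_cogalJOver {γ : Γ} (hγ : γ ∈ X) : η γ ∈ cogalJOver η a X :=
  Subgroup.mem_sInf.2 fun _ hc => hc.2.2 γ hγ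

theorem cogalJOver_le (hc : IsIdealSG Γ c) (hac : a ≤ c) (hX : ∀ γ ∈ X, η γ ∈ c) :
    cogalJOver η a X ≤ c :=
  sInf_le ⟨hc, hac, hX⟩

theorem cogalJOver_mono (hab : a ≤ b) (hXY : X ⊆ Y) : cogalJOver η a X ≤ cogalJOver η b Y :=
  cogalJOver_le isIdealSG_cogalJOver (hab.trans le_cogalJOver) fun _ hγ =>
    map_mem_cogalJOver (hXY hγ)

theorem isKneserIdeal_iff : IsKneserIdeal η a ↔ ∀ g, ∃ γ, (η γ)⁻¹ * g ∈ a := by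
  simp only [IsKneserIdeal, Function.Surjective, QuotientGroup.mk_surjective.forall,
    QuotientGroup.eq]

theorem IsKneserIdeal.mono (hab : a ≤ b) (ha : IsKneserIdeal η a) : IsKneserIdeal η b :=
  isKneserIdeal_iff.2 fun g => (isKneserIdeal_iff.1 ha g).imp fun _ h => hab h

theorem IsKneserIdeal.le_cogalJOver (ha : IsKneserIdeal η a) (hab : a ≤ b)
    (hb : η ⁻¹' b ⊆ X) : b ≤ cogalJOver η a X := by
  intro g hg
  obtain ⟨γ, hγ⟩ := isKneserIdeal_iff.1 ha g
  have hγb : η γ ∈ b := by simpa using b.mul_mem hg (b.inv_mem (hab hγ))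
  simpa using mul_mem (map_mem_cogalJOver (η := η) (a := a) (hb hγb)) (_root_.le_cogalJOver hγ)

end Ideals

section CoGalois

variable {Γ 𝔊 : Type*} [Group Γ] [TopologicalSpace Γ] [Group 𝔊] [TopologicalSpace 𝔊]
  [SMul Γ 𝔊]

/-- `IsCoGaloisIdeal η a` expressed inside `𝔊`, without passing to `𝔊 ⧸ a`
(`isCoGaloisIdeal_iff_isCoGaloisOver`). -/
def IsCoGaloisOver (η : Γ → 𝔊) (a : Subgroup 𝔊) : Prop :=
  IsKneserIdeal η a ∧ ∀ Λ : Subgroup Γ, IsClosed (Λ : Set Γ) → η ⁻¹' a ⊆ Λ →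
    η ⁻¹' cogalJOver η a Λ ⊆ Λ

variable {η : Γ → 𝔊} {a b : Subgroup 𝔊}

theorem IsCoGaloisOver.mono (hab : a ≤ b) (ha : IsCoGaloisOver η a) : IsCoGaloisOver η b := by
  refine ⟨ha.1.mono hab, fun Λ hΛ hb => ?_⟩
  have hJ : cogalJOver η b Λ ≤ cogalJOver η a Λ :=
    cogalJOver_le isIdealSG_cogalJOver (ha.1.le_cogalJOver hab hb) fun _ => map_mem_cogalJOver
  exact (preimage_mono hJ).trans (ha.2 Λ hΛ ((preimage_mono hab).trans hb))

end CoGalois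

section Quotient

variable {Γ 𝔊 : Type*} [Group Γ] [Group 𝔊] [TopologicalSpace 𝔊] [MulDistribMulAction Γ 𝔊]
  {a : Subgroup 𝔊} [a.Normal] [SMul Γ (𝔊 ⧸ a)]

theorem IsIdealSG.comap_mk (hsmul : ∀ (γ : Γ) (g : 𝔊), γ • (g : 𝔊 ⧸ a) = ((γ • g : 𝔊) : 𝔊 ⧸ a))
    {b : Subgroup (𝔊 ⧸ a)} (hb : IsIdealSG Γ b) : IsIdealSG Γ (b.comap (QuotientGroup.mk' a)) :=
  ⟨hb.1.preimage QuotientGroup.continuous_mk, hb.2.1.comap _, fun γ g hg => by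
    simpa [← hsmul] using hb.2.2 γ _ hg⟩

theorem IsIdealSG.map_mk (hsmul : ∀ (γ : Γ) (g : 𝔊), γ • (g : 𝔊 ⧸ a) = ((γ • g : 𝔊) : 𝔊 ⧸ a))
    {c : Subgroup 𝔊} (hc : IsIdealSG Γ c) (hac : a ≤ c) :
    IsIdealSG Γ (c.map (QuotientGroup.mk' a)) := by
  refine ⟨?_, hc.2.1.map _ (QuotientGroup.mk'_surjective a), ?_⟩
  · rw [← (QuotientGroup.isQuotientMap_mk a).isClosed_preimage]
    convert hc.1
    exact congrArg SetLike.coe (Subgroup.comap_map_eq_self (by rwa [QuotientGroup.ker_mk']))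
  · rintro γ _ ⟨g, hg, rfl⟩
    exact ⟨γ • g, hc.2.2 γ g hg, (hsmul γ g).symm⟩

theorem comap_mk_cogalJ [TopologicalSpace Γ] {η : Γ → 𝔊}
    (hsmul : ∀ (γ : Γ) (g : 𝔊), γ • (g : 𝔊 ⧸ a) = ((γ • g : 𝔊) : 𝔊 ⧸ a)) (X : Set Γ) :
    (cogalJ Γ (fun γ => (η γ : 𝔊 ⧸ a)) X).comap (QuotientGroup.mk' a) = cogalJOver η a X := by
  refine le_antisymm (le_sInf fun c ⟨hc, hac, hX⟩ => ?_) ?_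
  · calc (cogalJ Γ (fun γ => (η γ : 𝔊 ⧸ a)) X).comap (QuotientGroup.mk' a)
        ≤ (c.map (QuotientGroup.mk' a)).comap (QuotientGroup.mk' a) :=
          Subgroup.comap_mono <| sInf_le
            ⟨hc.map_mk hsmul hac, fun γ hγ => Subgroup.mem_map_of_mem _ (hX γ hγ)⟩
      _ = c := Subgroup.comap_map_eq_self (by rwa [QuotientGroup.ker_mk'])
  · refine cogalJOver_le ((IsIdealSG.sInf fun _ hb => hb.1).comap_mk hsmul) ?_
      fun γ hγ => Subgroup.mem_sInf.2 fun _ hb => hb.2 γ hγ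
    exact (QuotientGroup.ker_mk' a).ge.trans (MonoidHom.ker_le_comap _ _)

end Quotient

theorem isCoGaloisIdeal_iff_isCoGaloisOver {Γ 𝔊 : Type*} [Group Γ] [TopologicalSpace Γ]
    [Group 𝔊] [TopologicalSpace 𝔊] [MulDistribMulAction Γ 𝔊] (η : Γ → 𝔊) {a : Subgroup 𝔊}
    (ha : IsIdealSG Γ a) : IsCoGaloisIdeal η a ha.2.1 ha.2.2 ↔ IsCoGaloisOver η a := by
  let _ := ha.2.1
  let _ := quotSMul a ha.2.2
  have hpre (X : Set Γ) : (fun γ => (η γ : 𝔊 ⧸ a)) ⁻¹' cogalJ Γ (fun γ => (η γ : 𝔊 ⧸ a)) X =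
      η ⁻¹' cogalJOver η a X := by
    rw [← comap_mk_cogalJ (fun _ _ => rfl)]
    rfl
  have hker (Λ : Set Γ) : (∀ γ, (η γ : 𝔊 ⧸ a) = 1 → γ ∈ Λ) ↔ η ⁻¹' a ⊆ Λ := by
    simp only [QuotientGroup.eq_one_iff]
    rfl
  refine ⟨fun ⟨hsurj, hJ, _⟩ => ⟨hsurj, fun Λ hΛ hΛa => ?_⟩,
    fun ⟨hsurj, hJ⟩ => ⟨hsurj, fun Λ hΛ hΛa => ?_, fun _ => cogalJ_preimage_of_surjective hsurj⟩⟩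
  · rw [← hpre, hJ Λ hΛ ((hker Λ).2 hΛa)]
  · rw [hpre]
    exact (hJ Λ hΛ ((hker Λ).1 hΛa)).antisymm fun _ => map_mem_cogalJOver

section Profinite

variable (Γ : Type*) {𝔊 : Type*} [Monoid Γ] [Group 𝔊] [MulDistribMulAction Γ 𝔊]

def Subgroup.idealCore (N : Subgroup 𝔊) : Subgroup 𝔊 where
  carrier := {g | ∀ (γ : Γ) (h : 𝔊), h * (γ • g) * h⁻¹ ∈ N}
  one_mem' := by simp
  mul_mem' {x y} hx hy γ h := by
    simpa [smul_mul', mul_assoc] using N.mul_mem (hx γ h) (hy γ h)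
  inv_mem' {x} hx γ h := by
    simpa [smul_inv', mul_assoc] using N.inv_mem (hx γ h)

variable {Γ}

theorem Subgroup.idealCore_le (N : Subgroup 𝔊) : N.idealCore Γ ≤ N := fun g hg => by
  simpa using hg 1 1

theorem Subgroup.le_idealCore [TopologicalSpace 𝔊] {a N : Subgroup 𝔊} (ha : IsIdealSG Γ a)
    (haN : a ≤ N) : a ≤ N.idealCore Γ := fun g hg γ h =>
  haN (ha.2.1.conj_mem _ (ha.2.2 γ g hg) h)

variable [TopologicalSpace Γ] [CompactSpace Γ] [TopologicalSpace 𝔊] [IsTopologicalGroup 𝔊]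
  [CompactSpace 𝔊] [ContinuousSMul Γ 𝔊]

theorem Subgroup.isOpen_idealCore {N : Subgroup 𝔊} (hN : IsOpen (N : Set 𝔊)) :
    IsOpen (N.idealCore Γ : Set 𝔊) := by
  refine Subgroup.isOpen_of_mem_nhds (g := 1) _ ?_
  have hcont : Continuous fun z : 𝔊 × Γ × 𝔊 => z.2.2 * (z.2.1 • z.1) * z.2.2⁻¹ := by fun_prop
  have hnhds := isCompact_univ.eventually_forall_of_forall_eventually (x₀ := (1 : 𝔊))
    (P := fun g (p : Γ × 𝔊) => p.2 * (p.1 • g) * p.2⁻¹ ∈ N) fun p _ =>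
      hcont.continuousAt.eventually_mem (hN.mem_nhds (by simp))
  exact hnhds.mono fun g hg γ h => hg (γ, h) trivial

theorem Subgroup.isIdealSG_idealCore {N : Subgroup 𝔊} (hN : IsOpen (N : Set 𝔊)) :
    IsIdealSG Γ (N.idealCore Γ) := by
  refine ⟨Subgroup.isClosed_of_isOpen _ (isOpen_idealCore hN), ⟨fun n hn g γ h => ?_⟩,
    fun γ g hg δ h => ?_⟩
  · simpa [smul_mul', smul_inv', mul_assoc] using hn γ (h * γ • g)
  · simpa [smul_smul] using hg (δ * γ) h

variable [TotallyDisconnectedSpace 𝔊]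

theorem exists_isOpen_ideal_notMem {a : Subgroup 𝔊} (ha : IsIdealSG Γ a) {x : 𝔊} (hx : x ∉ a) :
    ∃ b : Subgroup 𝔊, IsIdealSG Γ b ∧ IsOpen (b : Set 𝔊) ∧ a ≤ b ∧ x ∉ b := by
  obtain ⟨N, hN, haN, hxN⟩ := exists_isOpen_subgroup_notMem ha.1 hx
  exact ⟨N.idealCore Γ, N.isIdealSG_idealCore hN, N.isOpen_idealCore hN,
    Subgroup.le_idealCore ha haN, fun h => hxN (N.idealCore_le h)⟩

theorem sInf_isOpen_ideal_ge {a : Subgroup 𝔊} (ha : IsIdealSG Γ a) :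
    sInf {b : Subgroup 𝔊 | IsIdealSG Γ b ∧ IsOpen (b : Set 𝔊) ∧ a ≤ b} = a := by
  refine le_antisymm (fun x hx => ?_) (le_sInf fun _ hb => hb.2.2)
  by_contra hxa
  obtain ⟨b, hb, hbo, hab, hxb⟩ := exists_isOpen_ideal_notMem ha hxa
  exact hxb (Subgroup.mem_sInf.1 hx b ⟨hb, hbo, hab⟩)

end Profinite

section Limits

variable {Γ 𝔊 : Type*} [Group Γ] [TopologicalSpace Γ] [IsTopologicalGroup Γ] [CompactSpace Γ]
  [TotallyDisconnectedSpace Γ] [Group 𝔊] [TopologicalSpace 𝔊] [IsTopologicalGroup 𝔊]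
  [MulDistribMulAction Γ 𝔊] {η : Γ → 𝔊}

theorem isCoGaloisOver_sInf (hη : Continuous η) {𝒞 : Set (Subgroup 𝔊)} (hne : 𝒞.Nonempty)
    (hdir : DirectedOn (· ≥ ·) 𝒞) (hideal : ∀ c ∈ 𝒞, IsIdealSG Γ c)
    (h : ∀ c ∈ 𝒞, IsCoGaloisOver η c) : IsCoGaloisOver η (sInf 𝒞) := by
  have : Nonempty 𝒞 := hne.to_subtype
  have hdir' : Directed (· ⊇ ·) fun c : 𝒞 => (c : Set 𝔊) := hdir.directed_val
  have hinter : ⋂ c : 𝒞, (c : Set 𝔊) = sInf 𝒞 := by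
    rw [Subgroup.coe_sInf, biInter_eq_iInter]
  refine ⟨isKneserIdeal_iff.2 fun g => ?_, fun Λ hΛ hΛm γ₀ hγ₀ => ?_⟩
  · by_contra! hg
    have hf : Continuous fun γ => (η γ)⁻¹ * g := by fun_prop
    obtain ⟨c, hc⟩ := exists_preimage_subset_of_directed hdir'
      (fun c => (hideal c c.2).1.preimage hf) isOpen_empty
      (by rw [hinter]; exact fun γ hγ => hg γ hγ)
    obtain ⟨γ, hγ⟩ := isKneserIdeal_iff.1 (h c c.2).1 g
    exact hc hγ
  · by_contra hγ₀Λ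
    obtain ⟨M, hM, hΛM, hγ₀M⟩ := exists_isOpen_subgroup_notMem hΛ hγ₀Λ
    obtain ⟨c, hc⟩ := exists_preimage_subset_of_directed hdir'
      (fun c => (hideal c c.2).1.preimage hη) hM (by rw [hinter]; exact hΛm.trans hΛM)
    exact hγ₀M <| (h c c.2).2 M (M.isClosed_of_isOpen hM) hc <|
      cogalJOver_mono (sInf_le c.2) hΛM hγ₀

theorem exists_minimal_isCoGaloisOver_le (hη : Continuous η) {a : Subgroup 𝔊}
    (ha : IsIdealSG Γ a) (hca : IsCoGaloisOver η a) :
    ∃ m ≤ a, Minimal (fun m => IsIdealSG Γ m ∧ IsCoGaloisOver η m) m :=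
  exists_minimal_le_of_isChain_sInf (fun _ hne hc hcP => ⟨IsIdealSG.sInf fun x hx => (hcP x hx).1,
    isCoGaloisOver_sInf hη hne (IsChain.directedOn (r := (· ≥ ·)) hc.symm)
      (fun x hx => (hcP x hx).1) fun x hx => (hcP x hx).2⟩) ⟨ha, hca⟩

variable [CompactSpace 𝔊] [TotallyDisconnectedSpace 𝔊] [ContinuousSMul Γ 𝔊]

theorem isCoGaloisOver_of_forall_isOpen (hη : Continuous η) {a : Subgroup 𝔊}
    (ha : IsIdealSG Γ a)
    (h : ∀ b : Subgroup 𝔊, IsIdealSG Γ b → a ≤ b → IsOpen (b : Set 𝔊) → IsCoGaloisOver η b) :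
    IsCoGaloisOver η a := by
  rw [← sInf_isOpen_ideal_ge ha]
  refine isCoGaloisOver_sInf hη ⟨⊤, isIdealSG_top, isOpen_univ, le_top⟩ ?_ (fun _ hb => hb.1)
    fun b hb => h b hb.1 hb.2.2 hb.2.1
  rintro b ⟨hb, hbo, hab⟩ b' ⟨hb', hbo', hab'⟩
  exact ⟨b ⊓ b', ⟨hb.inf hb', hbo.inter hbo', le_inf hab hab'⟩, inf_le_left, inf_le_right⟩

end Limits

theorem coGalois_ideal_properties_general
    {Γ 𝔊 : Type*} [Group Γ] [TopologicalSpace Γ] [IsTopologicalGroup Γ]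
    [CompactSpace Γ] [TotallyDisconnectedSpace Γ]
    [Group 𝔊] [TopologicalSpace 𝔊] [IsTopologicalGroup 𝔊]
    [CompactSpace 𝔊] [TotallyDisconnectedSpace 𝔊]
    [MulDistribMulAction Γ 𝔊] [ContinuousSMul Γ 𝔊]
    (η : Γ → 𝔊) (hcont : Continuous η) :
    -- (1)
    ((∀ a b : Subgroup 𝔊, ∀ (ha : IsIdealSG Γ a) (hb : IsIdealSG Γ b), a ≤ b →
        IsCoGaloisIdeal η a ha.2.1 ha.2.2 → IsCoGaloisIdeal η b hb.2.1 hb.2.2) ∧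
      (∀ a : Subgroup 𝔊, ∀ ha : IsIdealSG Γ a,
        IsCoGaloisIdeal η a ha.2.1 ha.2.2 → IsKneserIdeal η a)) ∧
    -- (2)
    (∀ a : Subgroup 𝔊, ∀ ha : IsIdealSG Γ a,
      (IsCoGaloisIdeal η a ha.2.1 ha.2.2 ↔
        ∀ b : Subgroup 𝔊, ∀ hb : IsIdealSG Γ b, a ≤ b → IsOpen (b : Set 𝔊) →
          IsCoGaloisIdeal η b hb.2.1 hb.2.2)) ∧
    -- (3)
    (∀ a : Subgroup 𝔊, ∀ ha : IsIdealSG Γ a, IsCoGaloisIdeal η a ha.2.1 ha.2.2 →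
      ∃ m : Subgroup 𝔊, ∃ hm : IsIdealSG Γ m, IsCoGaloisIdeal η m hm.2.1 hm.2.2 ∧ m ≤ a ∧
        ∀ m' : Subgroup 𝔊, ∀ hm' : IsIdealSG Γ m',
          IsCoGaloisIdeal η m' hm'.2.1 hm'.2.2 → m' ≤ m → m' = m) := by
  have tr {a : Subgroup 𝔊} (ha : IsIdealSG Γ a) := isCoGaloisIdeal_iff_isCoGaloisOver η ha
  refine ⟨⟨?_, ?_⟩, fun a ha => ⟨?_, ?_⟩, ?_⟩
  · exact fun a b ha hb hab h => (tr hb).2 (((tr ha).1 h).mono hab)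
  · exact fun a ha h => ((tr ha).1 h).1
  · exact fun h b hb hab _ => (tr hb).2 (((tr ha).1 h).mono hab)
  · exact fun h => (tr ha).2 <| isCoGaloisOver_of_forall_isOpen hcont ha fun b hb hab hbo =>
      (tr hb).1 (h b hb hab hbo)
  · intro a ha h
    obtain ⟨m, hma, ⟨hm, hmc⟩, hmin⟩ := exists_minimal_isCoGaloisOver_le hcont ha ((tr ha).1 h)
    exact ⟨m, hm, (tr hm).2 hmc, hma, fun m' hm' hm'c hle =>
      le_antisymm hle (hmin ⟨hm', (tr hm').1 hm'c⟩ hle)⟩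

/-- Properties of coGalois ideals for a generating cocycle `η : Γ → 𝔊`:
(1) the coGalois ideals form an upper subset of the ideals of `𝔊`, contained in the Kneser
ideals;
(2) an ideal `a` is coGalois if and only if every open ideal containing `a` is coGalois;
(3) every coGalois ideal contains a minimal coGalois ideal. -/
theorem coGalois_ideal_properties
    {Γ 𝔊 : Type*} [Group Γ] [TopologicalSpace Γ] [IsTopologicalGroup Γ]
    [CompactSpace Γ] [T2Space Γ] [TotallyDisconnectedSpace Γ]
    [Group 𝔊] [TopologicalSpace 𝔊] [IsTopologicalGroup 𝔊]
    [CompactSpace 𝔊] [T2Space 𝔊] [TotallyDisconnectedSpace 𝔊]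
    [MulDistribMulAction Γ 𝔊] [ContinuousSMul Γ 𝔊]
    (η : Γ → 𝔊) (hcont : Continuous η)
    (hcoc : ∀ σ τ : Γ, η (σ * τ) = η σ * σ • η τ)
    (hgen : (Subgroup.closure (Set.range η)).topologicalClosure = ⊤) :
    -- (1)
    ((∀ a b : Subgroup 𝔊, ∀ (ha : IsIdealSG Γ a) (hb : IsIdealSG Γ b), a ≤ b →
        IsCoGaloisIdeal η a ha.2.1 ha.2.2 → IsCoGaloisIdeal η b hb.2.1 hb.2.2) ∧
      (∀ a : Subgroup 𝔊, ∀ ha : IsIdealSG Γ a,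
        IsCoGaloisIdeal η a ha.2.1 ha.2.2 → IsKneserIdeal η a)) ∧
    -- (2)
    (∀ a : Subgroup 𝔊, ∀ ha : IsIdealSG Γ a,
      (IsCoGaloisIdeal η a ha.2.1 ha.2.2 ↔
        ∀ b : Subgroup 𝔊, ∀ hb : IsIdealSG Γ b, a ≤ b → IsOpen (b : Set 𝔊) →
          IsCoGaloisIdeal η b hb.2.1 hb.2.2)) ∧
    -- (3)
    (∀ a : Subgroup 𝔊, ∀ ha : IsIdealSG Γ a, IsCoGaloisIdeal η a ha.2.1 ha.2.2 →
      ∃ m : Subgroup 𝔊, ∃ hm : IsIdealSG Γ m, IsCoGaloisIdeal η m hm.2.1 hm.2.2 ∧ m ≤ a ∧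
        ∀ m' : Subgroup 𝔊, ∀ hm' : IsIdealSG Γ m',
          IsCoGaloisIdeal η m' hm'.2.1 hm'.2.2 → m' ≤ m → m' = m) :=
  coGalois_ideal_properties_general η hcont
end
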